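/- arXiv:2007.13103 — 3 statements merged into one kernel-verified Lean document; each statement's English description precedes it below -/
import Mathlib

section
/- Let the state space be E = ℝ with x ↦ D_n(x) decreasing and compact-valued. Suppose there exist upper semicontinuous functions ϑ_{n,1}, ϑ_{n,2} : D_n → ℝ_+ and measurable functions Θ_{n,1}, Θ_{n,2} : Z → ℝ_+ with Θ_{n,1}(Z_{n+1}), Θ_{n,2}(Z_{n+1}) ∈ L^p(Ω_{n+1},A_{n+1},P_{n+1}) such that |c_n(x,a,T_n(x,a,z))| ≤ ϑ_{n,1}(x,a) + Θ_{n,1}(z) and b(T_n(x,a,z)) ≤ ϑ_{n,2}(x,a) + Θ_{n,2}(z) for every (x,a,z) ∈ D_n × Z. Then the local L^p domination condition holds: for every (x̄,ā) ∈ D_n and every ε > 0 there exist measurable Θ_{n,1}^{x̄,ā}, Θ_{n,2}^{x̄,ā} : Z → ℝ_+ with Θ_{n,i}^{x̄,ā}(Z_{n+1}) ∈ L^p(P_{n+1}) such that |c_n(x,a,T_n(x,a,z))| ≤ Θ_{n,1}^{x̄,ā}(z) and b(T_n(x,a,z)) ≤ Θ_{n,2}^{x̄,ā}(z) for all z ∈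 Z and all (x,a) ∈ B_ε(x̄,ā) ∩ D_n. -/
open MeasureTheory Set
open scoped ENNReal

/-!
Since the sections `D(x)` decrease in `x`, the part of `D` in the closed `ε`-ball around
`(x̄, ā)` lies in the compact set `[x̄ - ε, x̄ + ε] × D(x̄ - ε)`. An upper semicontinuous `ϑᵢ`
is bounded above there by some `Mᵢ`, so `max Mᵢ 0 + Θᵢ` is a dominating function in `L^p`.
-/

theorem inter_closedBall_subset_Icc_prod_section {A : Type*} [PseudoMetricSpace A]
    {D : Set (ℝ × A)}
    (hD : ∀ x x' : ℝ, x ≤ x' → {a : A | (x', a) ∈ D} ⊆ {a : A | (x, a) ∈ D})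
    (xa : ℝ × A) (ε : ℝ) :
    D ∩ Metric.closedBall xa ε ⊆ Icc (xa.1 - ε) (xa.1 + ε) ×ˢ {a | (xa.1 - ε, a) ∈ D} := by
  rintro ⟨x, a⟩ ⟨hxa, hball⟩
  have hx : |x - xa.1| ≤ ε :=
    (le_max_left _ _).trans (Metric.mem_closedBall.1 hball)
  obtain ⟨hlo, hhi⟩ := abs_le.1 hx
  have hxI : x ∈ Icc (xa.1 - ε) (xa.1 + ε) := ⟨by linarith, by linarith⟩
  exact ⟨hxI, hD _ _ hxI.1 hxa⟩

theorem exists_memLp_bound_of_upperSemicontinuousOn {X Z : Type*} [TopologicalSpace X]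
    [MeasurableSpace Z] {P : Measure Z} [IsFiniteMeasure P] {p : ℝ≥0∞}
    {ϑ : X → ℝ} {K : Set X} (hK : IsCompact K) (hϑ : UpperSemicontinuousOn ϑ K)
    {Θ : Z → ℝ} (hΘm : Measurable Θ) (hΘpos : ∀ z, 0 ≤ Θ z) (hΘ : MemLp Θ p P) :
    ∃ Θ' : Z → ℝ, Measurable Θ' ∧ (∀ z, 0 ≤ Θ' z) ∧ MemLp Θ' p P ∧
      ∀ xa ∈ K, ∀ z, ϑ xa + Θ z ≤ Θ' z := by
  obtain ⟨M, hM⟩ := hϑ.bddAbove_of_isCompact hK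
  refine ⟨fun z => max M 0 + Θ z, measurable_const.add hΘm,
    fun z => add_nonneg (le_max_right _ _) (hΘpos z), (memLp_const (max M 0)).add hΘ,
    fun xa hxa z => ?_⟩
  have hϑM : ϑ xa ≤ max M 0 := (hM (mem_image_of_mem ϑ hxa)).trans (le_max_left _ _)
  exact add_le_add_left hϑM (Θ z)

theorem robust_separation_implies_local_Lp_domination_general
    {A Z : Type*} [MetricSpace A] [MeasurableSpace Z]
    (P : Measure Z) [IsProbabilityMeasure P] (p : ℝ≥0∞)
    (D : Set (ℝ × A))
    (hDdec : ∀ x x' : ℝ, x ≤ x' → {a : A | (x', a) ∈ D} ⊆ {a : A | (x, a) ∈ D})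
    (hDcomp : ∀ x : ℝ, IsCompact {a : A | (x, a) ∈ D})
    (T : ℝ → A → Z → ℝ) (c : ℝ → A → ℝ → ℝ) (b : ℝ → ℝ)
    (ϑ₁ ϑ₂ : ℝ × A → ℝ)
    (hϑ₁usc : UpperSemicontinuous ϑ₁) (hϑ₂usc : UpperSemicontinuous ϑ₂)
    (Θ₁ Θ₂ : Z → ℝ)
    (hΘ₁m : Measurable Θ₁) (hΘ₂m : Measurable Θ₂)
    (hΘ₁pos : ∀ z, 0 ≤ Θ₁ z) (hΘ₂pos : ∀ z, 0 ≤ Θ₂ z)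
    (hΘ₁Lp : MemLp Θ₁ p P) (hΘ₂Lp : MemLp Θ₂ p P)
    (hdom₁ : ∀ x a, (x, a) ∈ D → ∀ z, |c x a (T x a z)| ≤ ϑ₁ (x, a) + Θ₁ z)
    (hdom₂ : ∀ x a, (x, a) ∈ D → ∀ z, b (T x a z) ≤ ϑ₂ (x, a) + Θ₂ z) :
    ∀ xa : ℝ × A, xa ∈ D → ∀ ε : ℝ, 0 < ε →
      ∃ Θ₁' Θ₂' : Z → ℝ,
        Measurable Θ₁' ∧ Measurable Θ₂' ∧ (∀ z, 0 ≤ Θ₁' z) ∧ (∀ z, 0 ≤ Θ₂' z) ∧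
        MemLp Θ₁' p P ∧ MemLp Θ₂' p P ∧
        ∀ x a, (x, a) ∈ D → (x, a) ∈ Metric.closedBall xa ε → ∀ z,
          |c x a (T x a z)| ≤ Θ₁' z ∧ b (T x a z) ≤ Θ₂' z := by
  intro xa _ ε _
  have hK : IsCompact (Icc (xa.1 - ε) (xa.1 + ε) ×ˢ {a | (xa.1 - ε, a) ∈ D}) :=
    isCompact_Icc.prod (hDcomp _)
  obtain ⟨Θ₁', hm₁, hpos₁, hLp₁, hle₁⟩ := exists_memLp_bound_of_upperSemicontinuousOn hK
    (hϑ₁usc.upperSemicontinuousOn _) hΘ₁m hΘ₁pos hΘ₁Lp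
  obtain ⟨Θ₂', hm₂, hpos₂, hLp₂, hle₂⟩ := exists_memLp_bound_of_upperSemicontinuousOn hK
    (hϑ₂usc.upperSemicontinuousOn _) hΘ₂m hΘ₂pos hΘ₂Lp
  refine ⟨Θ₁', Θ₂', hm₁, hm₂, hpos₁, hpos₂, hLp₁, hLp₂, fun x a hD hball z => ?_⟩
  have hxaK := inter_closedBall_subset_Icc_prod_section hDdec xa ε ⟨hD, hball⟩
  exact ⟨(hdom₁ x a hD z).trans (hle₁ _ hxaK z), (hdom₂ x a hD z).trans (hle₂ _ hxaK z)⟩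

/-- Let the state space be `E = ℝ` with `x ↦ D_n(x)` decreasing and
compact-valued. Suppose there exist upper semicontinuous functions `ϑ₁, ϑ₂ : D_n → ℝ₊` and
measurable functions `Θ₁, Θ₂ : Z → ℝ₊` with `Θ₁(Z_{n+1}), Θ₂(Z_{n+1}) ∈ L^p(Ω,𝒜,P)` such that
`|c_n(x,a,T_n(x,a,z))| ≤ ϑ₁(x,a) + Θ₁(z)` and `b(T_n(x,a,z)) ≤ ϑ₂(x,a) + Θ₂(z)` for all
`(x,a,z) ∈ D_n × Z`. Then the local `L^p` domination condition holds: for every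
`(x̄,ā) ∈ D_n` and every `ε > 0` there exist measurable `Θ₁', Θ₂' : Z → ℝ₊` with
`Θᵢ'(Z_{n+1}) ∈ L^p(P)` dominating `|c_n(x,a,T_n(x,a,·))|` and `b(T_n(x,a,·))` uniformly on
`B_ε(x̄,ā) ∩ D_n`. -/
theorem robust_separation_implies_local_Lp_domination
    {A Z : Type*} [MetricSpace A] [MeasurableSpace Z]
    (P : Measure Z) [IsProbabilityMeasure P] (p : ℝ≥0∞) [Fact (1 ≤ p)]
    (D : Set (ℝ × A))
    (hDdec : ∀ x x' : ℝ, x ≤ x' → {a : A | (x', a) ∈ D} ⊆ {a : A | (x, a) ∈ D})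
    (hDcomp : ∀ x : ℝ, IsCompact {a : A | (x, a) ∈ D})
    (T : ℝ → A → Z → ℝ) (c : ℝ → A → ℝ → ℝ) (b : ℝ → ℝ) (hb : ∀ x, 1 ≤ b x)
    (ϑ₁ ϑ₂ : ℝ × A → ℝ)
    (hϑ₁usc : UpperSemicontinuous ϑ₁) (hϑ₂usc : UpperSemicontinuous ϑ₂)
    (hϑ₁pos : ∀ xa, 0 ≤ ϑ₁ xa) (hϑ₂pos : ∀ xa, 0 ≤ ϑ₂ xa)
    (Θ₁ Θ₂ : Z → ℝ)
    (hΘ₁m : Measurable Θ₁) (hΘ₂m : Measurable Θ₂)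
    (hΘ₁pos : ∀ z, 0 ≤ Θ₁ z) (hΘ₂pos : ∀ z, 0 ≤ Θ₂ z)
    (hΘ₁Lp : MemLp Θ₁ p P) (hΘ₂Lp : MemLp Θ₂ p P)
    (hdom₁ : ∀ x a, (x, a) ∈ D → ∀ z, |c x a (T x a z)| ≤ ϑ₁ (x, a) + Θ₁ z)
    (hdom₂ : ∀ x a, (x, a) ∈ D → ∀ z, b (T x a z) ≤ ϑ₂ (x, a) + Θ₂ z) :
    ∀ xa : ℝ × A, xa ∈ D → ∀ ε : ℝ, 0 < ε →
      ∃ Θ₁' Θ₂' : Z → ℝ,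
        Measurable Θ₁' ∧ Measurable Θ₂' ∧ (∀ z, 0 ≤ Θ₁' z) ∧ (∀ z, 0 ≤ Θ₂' z) ∧
        MemLp Θ₁' p P ∧ MemLp Θ₂' p P ∧
        ∀ x a, (x, a) ∈ D → (x, a) ∈ Metric.closedBall xa ε → ∀ z,
          |c x a (T x a z)| ≤ Θ₁' z ∧ b (T x a z) ≤ Θ₂' z :=
  robust_separation_implies_local_Lp_domination_general P p D hDdec hDcomp T c b ϑ₁ ϑ₂ hϑ₁usc hϑ₂usc
    Θ₁ Θ₂ hΘ₁m hΘ₂m hΘ₁pos hΘ₂pos hΘ₁Lp hΘ₂Lp hdom₁ hdom₂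
end

section
/- In the finite-horizon robust MDP with real state space under the monotone semicontinuous model, assume additionally a convex model: A is a subset of a vector space, D_n is a convex set, c_N is convex, (x,a) ↦ T_n(x,a,z) is convex for every z, and (x,a,x') ↦ c_n(x,a,x') is convex. Then every value function J_n (n = 0,…,N) is convex on ℝ. -/
/-!
Backward induction on `n` with the invariant: `J n` is increasing, convex, and
`|J n| ≤ κ * b` for some `κ ≥ 0`, where `b = bu - bl ≥ 0`. The bound (with Hölder's inequality
for the `L^q` densities) makes every integral in the Bellman equation finite and every `sSup` /
`sInf` one of a bounded nonempty set, so none of them takes a junk value. For convexity, fix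
`z`: since `c` is increasing in its last argument and `J (n + 1)` is increasing and convex,
`(x, a) ↦ c x a (T x a z) + J (n + 1) (T x a z)` is jointly convex on `D n`; integrating in `z`
and taking the supremum over `Q` keep joint convexity, and minimizing a jointly convex function
over the sections of the convex set `D n` gives a convex function of `x`.
-/

open MeasureTheory Filter Set
open scoped ENNReal

section Order

variable {ι : Type*} {I : Set ι} {u : ι → ℝ} {B : ℝ}

theorem bddAbove_image_of_abs_le (h : ∀ i ∈ I, |u i| ≤ B) : BddAbove (u '' I) :=
  ⟨B, by rintro _ ⟨i, hi, rfl⟩; exact (le_abs_self _).trans (h i hi)⟩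

theorem bddBelow_image_of_abs_le (h : ∀ i ∈ I, |u i| ≤ B) : BddBelow (u '' I) :=
  ⟨-B, by rintro _ ⟨i, hi, rfl⟩; exact neg_le_of_abs_le (h i hi)⟩

theorem abs_csSup_image_le (hI : I.Nonempty) (h : ∀ i ∈ I, |u i| ≤ B) :
    |sSup (u '' I)| ≤ B := by
  obtain ⟨i, hi⟩ := hI
  refine abs_le.2 ⟨(neg_le_of_abs_le (h i hi)).trans ?_, csSup_le ⟨u i, i, hi, rfl⟩ ?_⟩
  · exact le_csSup (bddAbove_image_of_abs_le h) ⟨i, hi, rfl⟩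
  · rintro _ ⟨j, hj, rfl⟩
    exact le_of_abs_le (h j hj)

theorem abs_csInf_image_le (hI : I.Nonempty) (h : ∀ i ∈ I, |u i| ≤ B) :
    |sInf (u '' I)| ≤ B := by
  obtain ⟨i, hi⟩ := hI
  refine abs_le.2 ⟨le_csInf ⟨u i, i, hi, rfl⟩ ?_, ?_⟩
  · rintro _ ⟨j, hj, rfl⟩
    exact neg_le_of_abs_le (h j hj)
  · exact (csInf_le (bddBelow_image_of_abs_le h) ⟨i, hi, rfl⟩).trans (le_of_abs_le (h i hi))

theorem monotone_csInf_image_section {E A : Type*} [Preorder E] {D : Set (E × A)} {G : E → A → ℝ}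
    (hne : ∀ x, {a | (x, a) ∈ D}.Nonempty) (hbdd : ∀ x, BddBelow (G x '' {a | (x, a) ∈ D}))
    (hanti : ∀ x y, x ≤ y → {a | (y, a) ∈ D} ⊆ {a | (x, a) ∈ D})
    (hmono : ∀ x y, x ≤ y → ∀ a, (y, a) ∈ D → G x a ≤ G y a) :
    Monotone fun x => sInf (G x '' {a | (x, a) ∈ D}) := by
  intro x y hxy
  refine le_csInf ((hne y).image _) ?_
  rintro _ ⟨a, ha, rfl⟩
  exact (csInf_le (hbdd x) ⟨a, hanti x y hxy ha, rfl⟩).trans (hmono x y hxy a ha)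

end Order

section Convexity

variable {E A ι Z : Type*} [AddCommGroup E] [Module ℝ E] [AddCommGroup A] [Module ℝ A]

theorem convexOn_csSup_image {s : Set E} {I : Set ι} {F : ι → E → ℝ} (hs : Convex ℝ s)
    (hI : I.Nonempty) (hF : ∀ i ∈ I, ConvexOn ℝ s (F i))
    (hbdd : ∀ x ∈ s, BddAbove ((F · x) '' I)) :
    ConvexOn ℝ s fun x => sSup ((F · x) '' I) := by
  refine ⟨hs, fun x hx y hy t u ht hu htu => csSup_le (hI.image _) ?_⟩
  rintro _ ⟨i, hi, rfl⟩
  calc F i (t • x + u • y) ≤ t • F i x + u • F i y := (hF i hi).2 hx hy ht hu htu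
    _ ≤ t • sSup ((F · x) '' I) + u • sSup ((F · y) '' I) := by
      gcongr
      · exact le_csSup (hbdd x hx) ⟨i, hi, rfl⟩
      · exact le_csSup (hbdd y hy) ⟨i, hi, rfl⟩

theorem convexOn_csInf_image_section {s : Set E} {D : Set (E × A)} {G : E → A → ℝ}
    (hs : Convex ℝ s) (hG : ConvexOn ℝ D fun p => G p.1 p.2)
    (hne : ∀ x ∈ s, {a | (x, a) ∈ D}.Nonempty)
    (hbdd : ∀ x ∈ s, BddBelow (G x '' {a | (x, a) ∈ D})) :
    ConvexOn ℝ s fun x => sInf (G x '' {a | (x, a) ∈ D}) := by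
  refine ⟨hs, fun x hx y hy t u ht hu htu => le_of_forall_pos_le_add fun ε hε => ?_⟩
  obtain ⟨_, ⟨a, ha, rfl⟩, hxa⟩ := Real.lt_sInf_add_pos ((hne x hx).image (G x)) hε
  obtain ⟨_, ⟨b, hb, rfl⟩, hyb⟩ := Real.lt_sInf_add_pos ((hne y hy).image (G y)) hε
  have hmem : (t • x + u • y, t • a + u • b) ∈ D := hG.1 ha hb ht hu htu
  calc sInf (G (t • x + u • y) '' {a | (t • x + u • y, a) ∈ D})
      ≤ G (t • x + u • y) (t • a + u • b) :=
        csInf_le (hbdd _ (hs hx hy ht hu htu)) ⟨_, hmem, rfl⟩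
    _ ≤ t • G x a + u • G y b := hG.2 ha hb ht hu htu
    _ ≤ t • (sInf (G x '' {a | (x, a) ∈ D}) + ε) + u • (sInf (G y '' {a | (y, a) ∈ D}) + ε) := by
        gcongr
    _ = t • sInf (G x '' {a | (x, a) ∈ D}) + u • sInf (G y '' {a | (y, a) ∈ D}) + ε := by
        simp only [smul_eq_mul]
        linear_combination ε * htu

theorem ConvexOn.comp_prodMk_of_monotone {s : Set E} {f : E → ℝ} {g : E × ℝ → ℝ}
    (hg : ConvexOn ℝ (s ×ˢ univ) g) (hmono : ∀ x ∈ s, Monotone fun y => g (x, y))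
    (hf : ConvexOn ℝ s f) : ConvexOn ℝ s fun x => g (x, f x) := by
  refine ⟨hf.1, fun x hx y hy t u ht hu htu => ?_⟩
  calc g (t • x + u • y, f (t • x + u • y)) ≤ g (t • x + u • y, t • f x + u • f y) :=
        hmono _ (hf.1 hx hy ht hu htu) (hf.2 hx hy ht hu htu)
    _ ≤ t • g (x, f x) + u • g (y, f y) :=
        hg.2 (mk_mem_prod hx (mem_univ _)) (mk_mem_prod hy (mem_univ _)) ht hu htu

theorem convexOn_integral [MeasurableSpace Z] {μ : Measure Z} {s : Set E} {F : E → Z → ℝ}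
    (hs : Convex ℝ s) (hF : ∀ᵐ z ∂μ, ConvexOn ℝ s (F · z))
    (hint : ∀ x ∈ s, Integrable (F x) μ) :
    ConvexOn ℝ s fun x => ∫ z, F x z ∂μ := by
  refine ⟨hs, fun x hx y hy t u ht hu htu => ?_⟩
  have hx' : Integrable (fun z => t • F x z) μ := (hint x hx).smul t
  have hy' : Integrable (fun z => u • F y z) μ := (hint y hy).smul u
  calc ∫ z, F (t • x + u • y) z ∂μ ≤ ∫ z, (t • F x z + u • F y z) ∂μ :=
        integral_mono_ae (hint _ (hs hx hy ht hu htu)) (hx'.add hy')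
          (hF.mono fun z hz => hz.2 hx hy ht hu htu)
    _ = t • ∫ z, F x z ∂μ + u • ∫ z, F y z ∂μ := by
        rw [integral_add hx' hy', integral_smul, integral_smul]

end Convexity

theorem MeasureTheory.MemLp.integrable_of_rnDeriv_memLp {Z : Type*} [MeasurableSpace Z]
    {P Q : Measure Z} [SigmaFinite P] [SigmaFinite Q] {p q : ℝ≥0∞} [p.HolderConjugate q]
    {f : Z → ℝ} (hf : MemLp f p P) (hQP : Q ≪ P)
    (hdens : MemLp (fun z => (Q.rnDeriv P z).toReal) q P) : Integrable f Q :=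
  (integrable_toReal_rnDeriv_mul_iff hQP).1 (hdens.integrable_mul hf)

theorem abs_integral_le_of_integral_min_max {Z : Type*} [MeasurableSpace Z] {μ : Measure Z}
    {f : Z → ℝ} (hf : Integrable f μ) {l u : ℝ} (hl0 : l ≤ 0) (hu0 : 0 ≤ u)
    (hl : l ≤ ∫ z, min (f z) 0 ∂μ) (hu : ∫ z, max (f z) 0 ∂μ ≤ u) :
    |∫ z, f z ∂μ| ≤ u - l := by
  have hmin : Integrable (fun z => min (f z) 0) μ := hf.inf (integrable_zero Z ℝ μ)
  have h₁ := integral_mono hmin hf fun z => min_le_left (f z) 0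
  have h₂ := integral_mono hf hf.pos_part fun z => le_max_left (f z) 0
  exact abs_le.2 ⟨by linarith, by linarith⟩

structure MonotoneConvexBoundedBy (b J : ℝ → ℝ) : Prop where
  monotone : Monotone J
  convexOn : ConvexOn ℝ univ J
  exists_abs_le : ∃ κ, 0 ≤ κ ∧ ∀ y, |J y| ≤ κ * b y

theorem monotoneConvexBoundedBy_sub {f bl bu : ℝ → ℝ} (hmono : Monotone f)
    (hconv : ConvexOn ℝ univ f) (hbl0 : ∀ x, bl x ≤ 0) (hbu0 : ∀ x, 0 ≤ bu x)
    (hf : ∀ x, bl x ≤ f x ∧ f x ≤ bu x) : MonotoneConvexBoundedBy (bu - bl) f := by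
  refine ⟨hmono, hconv, 1, zero_le_one, fun y => abs_le.2 ⟨?_, ?_⟩⟩ <;>
    simp only [Pi.sub_apply] <;> linarith [hf y, hbl0 y, hbu0 y]

section Stage

variable {A Z : Type*} [MeasurableSpace Z]

noncomputable def worstCaseCost (T : ℝ → A → Z → ℝ) (c : ℝ → A → ℝ → ℝ)
    (𝒬 : Set (Measure Z)) (J : ℝ → ℝ) (x : ℝ) (a : A) : ℝ :=
  sSup ((fun Q : Measure Z => ∫ z, (c x a (T x a z) + J (T x a z)) ∂Q) '' 𝒬)

noncomputable def robustBellman (D : Set (ℝ × A)) (T : ℝ → A → Z → ℝ) (c : ℝ → A → ℝ → ℝ)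
    (𝒬 : Set (Measure Z)) (J : ℝ → ℝ) (x : ℝ) : ℝ :=
  sInf (worstCaseCost T c 𝒬 J x '' {a | (x, a) ∈ D})

structure IsBoundingFunction (D : Set (ℝ × A)) (T : ℝ → A → Z → ℝ) (c : ℝ → A → ℝ → ℝ)
    (𝒬 : Set (Measure Z)) (α : ℝ) (b : ℝ → ℝ) : Prop where
  integrable_cost : ∀ x a, (x, a) ∈ D → ∀ Q ∈ 𝒬, Integrable (fun z => c x a (T x a z)) Q
  integrable_comp : ∀ x a, (x, a) ∈ D → ∀ Q ∈ 𝒬, Integrable (fun z => b (T x a z)) Q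
  abs_integral_cost_le : ∀ x a, (x, a) ∈ D → ∀ Q ∈ 𝒬, |∫ z, c x a (T x a z) ∂Q| ≤ b x
  integral_comp_le : ∀ x a, (x, a) ∈ D → ∀ Q ∈ 𝒬, ∫ z, b (T x a z) ∂Q ≤ α * b x

namespace IsBoundingFunction

variable {D : Set (ℝ × A)} {T : ℝ → A → Z → ℝ} {c : ℝ → A → ℝ → ℝ} {𝒬 : Set (Measure Z)}
  {α κ : ℝ} {b J : ℝ → ℝ} {x : ℝ} {a : A} {Q : Measure Z}

theorem integrable_comp_of_abs_le (hb : IsBoundingFunction D T c 𝒬 α b)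
    (hT : ∀ x a, Measurable (T x a)) (hJ : Measurable J) (hJb : ∀ y, |J y| ≤ κ * b y)
    (hxa : (x, a) ∈ D) (hQ : Q ∈ 𝒬) : Integrable (fun z => J (T x a z)) Q :=
  ((hb.integrable_comp x a hxa Q hQ).const_mul κ).mono' (hJ.comp (hT x a)).aestronglyMeasurable
    (ae_of_all _ fun z => hJb (T x a z))

theorem integrable_integrand (hb : IsBoundingFunction D T c 𝒬 α b)
    (hT : ∀ x a, Measurable (T x a)) (hJ : Measurable J) (hJb : ∀ y, |J y| ≤ κ * b y)
    (hxa : (x, a) ∈ D) (hQ : Q ∈ 𝒬) :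
    Integrable (fun z => c x a (T x a z) + J (T x a z)) Q :=
  (hb.integrable_cost x a hxa Q hQ).add (hb.integrable_comp_of_abs_le hT hJ hJb hxa hQ)

theorem abs_integral_integrand_le (hb : IsBoundingFunction D T c 𝒬 α b)
    (hT : ∀ x a, Measurable (T x a)) (hJ : Measurable J) (hκ : 0 ≤ κ)
    (hJb : ∀ y, |J y| ≤ κ * b y) (hxa : (x, a) ∈ D) (hQ : Q ∈ 𝒬) :
    |∫ z, (c x a (T x a z) + J (T x a z)) ∂Q| ≤ (1 + κ * α) * b x := by
  have hbT := hb.integrable_comp x a hxa Q hQ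
  have hJT := hb.integrable_comp_of_abs_le hT hJ hJb hxa hQ
  have hJint : |∫ z, J (T x a z) ∂Q| ≤ κ * (α * b x) :=
    calc |∫ z, J (T x a z) ∂Q| ≤ ∫ z, κ * b (T x a z) ∂Q :=
          abs_integral_le_integral_abs.trans
            (integral_mono hJT.abs (hbT.const_mul κ) fun z => hJb (T x a z))
      _ ≤ κ * (α * b x) := by
          rw [integral_const_mul]
          exact mul_le_mul_of_nonneg_left (hb.integral_comp_le x a hxa Q hQ) hκ
  rw [integral_add (hb.integrable_cost x a hxa Q hQ) hJT]
  calc _ ≤ _ := abs_add_le _ _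
    _ ≤ b x + κ * (α * b x) := add_le_add (hb.abs_integral_cost_le x a hxa Q hQ) hJint
    _ = (1 + κ * α) * b x := by ring

theorem bddAbove_integrals (hb : IsBoundingFunction D T c 𝒬 α b)
    (hT : ∀ x a, Measurable (T x a)) (hJ : Measurable J) (hκ : 0 ≤ κ)
    (hJb : ∀ y, |J y| ≤ κ * b y) (hxa : (x, a) ∈ D) :
    BddAbove ((fun Q : Measure Z => ∫ z, (c x a (T x a z) + J (T x a z)) ∂Q) '' 𝒬) :=
  bddAbove_image_of_abs_le fun _ hQ => hb.abs_integral_integrand_le hT hJ hκ hJb hxa hQ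

theorem abs_worstCaseCost_le (hb : IsBoundingFunction D T c 𝒬 α b)
    (hT : ∀ x a, Measurable (T x a)) (hJ : Measurable J) (hκ : 0 ≤ κ)
    (hJb : ∀ y, |J y| ≤ κ * b y) (h𝒬 : 𝒬.Nonempty) (hxa : (x, a) ∈ D) :
    |worstCaseCost T c 𝒬 J x a| ≤ (1 + κ * α) * b x :=
  abs_csSup_image_le h𝒬 fun _ hQ => hb.abs_integral_integrand_le hT hJ hκ hJb hxa hQ

theorem bddBelow_worstCaseCost (hb : IsBoundingFunction D T c 𝒬 α b)
    (hT : ∀ x a, Measurable (T x a)) (hJ : Measurable J) (hκ : 0 ≤ κ)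
    (hJb : ∀ y, |J y| ≤ κ * b y) (h𝒬 : 𝒬.Nonempty) (x : ℝ) :
    BddBelow (worstCaseCost T c 𝒬 J x '' {a | (x, a) ∈ D}) :=
  bddBelow_image_of_abs_le fun _ ha => hb.abs_worstCaseCost_le hT hJ hκ hJb h𝒬 ha

theorem abs_robustBellman_le (hb : IsBoundingFunction D T c 𝒬 α b)
    (hT : ∀ x a, Measurable (T x a)) (hJ : Measurable J) (hκ : 0 ≤ κ)
    (hJb : ∀ y, |J y| ≤ κ * b y) (h𝒬 : 𝒬.Nonempty)
    (hDne : ∀ x, {a | (x, a) ∈ D}.Nonempty) (x : ℝ) :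
    |robustBellman D T c 𝒬 J x| ≤ (1 + κ * α) * b x :=
  abs_csInf_image_le (hDne x) fun _ ha => hb.abs_worstCaseCost_le hT hJ hκ hJb h𝒬 ha

theorem worstCaseCost_mono (hb : IsBoundingFunction D T c 𝒬 α b)
    (hT : ∀ x a, Measurable (T x a)) (hJ : Monotone J) (hκ : 0 ≤ κ)
    (hJb : ∀ y, |J y| ≤ κ * b y) (h𝒬 : 𝒬.Nonempty)
    (hTmono : ∀ a z, Monotone fun x => T x a z)
    (hcmono : ∀ a, Monotone fun xx : ℝ × ℝ => c xx.1 a xx.2)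
    {y : ℝ} (hxy : x ≤ y) (hxa : (x, a) ∈ D) (hya : (y, a) ∈ D) :
    worstCaseCost T c 𝒬 J x a ≤ worstCaseCost T c 𝒬 J y a := by
  refine csSup_le (h𝒬.image _) ?_
  rintro _ ⟨Q, hQ, rfl⟩
  refine le_trans ?_ (le_csSup (hb.bddAbove_integrals hT hJ.measurable hκ hJb hya) ⟨Q, hQ, rfl⟩)
  refine integral_mono (hb.integrable_integrand hT hJ.measurable hJb hxa hQ)
    (hb.integrable_integrand hT hJ.measurable hJb hya hQ) fun z => ?_
  have hTxy : T x a z ≤ T y a z := hTmono a z hxy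
  exact add_le_add (hcmono a (Prod.mk_le_mk.2 ⟨hxy, hTxy⟩)) (hJ hTxy)

theorem monotone_robustBellman (hb : IsBoundingFunction D T c 𝒬 α b)
    (hT : ∀ x a, Measurable (T x a)) (hJ : Monotone J) (hκ : 0 ≤ κ)
    (hJb : ∀ y, |J y| ≤ κ * b y) (h𝒬 : 𝒬.Nonempty)
    (hDne : ∀ x, {a | (x, a) ∈ D}.Nonempty)
    (hDdec : ∀ x x' : ℝ, x ≤ x' → {a : A | (x', a) ∈ D} ⊆ {a : A | (x, a) ∈ D})
    (hTmono : ∀ a z, Monotone fun x => T x a z)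
    (hcmono : ∀ a, Monotone fun xx : ℝ × ℝ => c xx.1 a xx.2) :
    Monotone (robustBellman D T c 𝒬 J) :=
  monotone_csInf_image_section hDne (hb.bddBelow_worstCaseCost hT hJ.measurable hκ hJb h𝒬) hDdec
    fun _ _ hxy _ hya =>
      hb.worstCaseCost_mono hT hJ hκ hJb h𝒬 hTmono hcmono hxy (hDdec _ _ hxy hya) hya

end IsBoundingFunction

end Stage

section StageConvexity

variable {A Z : Type*} [AddCommGroup A] [Module ℝ A]
  {D : Set (ℝ × A)} {T : ℝ → A → Z → ℝ} {c : ℝ → A → ℝ → ℝ} {J : ℝ → ℝ}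

theorem convexOn_integrand (hJmono : Monotone J) (hJconv : ConvexOn ℝ univ J)
    (hDconv : Convex ℝ D) (hTconv : ∀ z, ConvexOn ℝ D fun pa : ℝ × A => T pa.1 pa.2 z)
    (hcconv : ConvexOn ℝ (D ×ˢ univ) fun t : (ℝ × A) × ℝ => c t.1.1 t.1.2 t.2)
    (hcmono : ∀ a, Monotone fun xx : ℝ × ℝ => c xx.1 a xx.2) (z : Z) :
    ConvexOn ℝ D fun p : ℝ × A => c p.1 p.2 (T p.1 p.2 z) + J (T p.1 p.2 z) := by
  have hJsnd : ConvexOn ℝ (D ×ˢ univ) fun t : (ℝ × A) × ℝ => J t.2 :=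
    (hJconv.comp_linearMap (LinearMap.snd ℝ (ℝ × A) ℝ)).subset (subset_univ _)
      (hDconv.prod convex_univ)
  refine (hcconv.add hJsnd).comp_prodMk_of_monotone (fun p _ y y' hyy' => ?_) (hTconv z)
  exact add_le_add (hcmono p.2 (Prod.mk_le_mk.2 ⟨le_rfl, hyy'⟩)) (hJmono hyy')

variable [MeasurableSpace Z] {𝒬 : Set (Measure Z)} {α κ : ℝ} {b : ℝ → ℝ}

namespace IsBoundingFunction

theorem convexOn_worstCaseCost (hb : IsBoundingFunction D T c 𝒬 α b)
    (hT : ∀ x a, Measurable (T x a)) (hJmono : Monotone J) (hJconv : ConvexOn ℝ univ J)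
    (hκ : 0 ≤ κ) (hJb : ∀ y, |J y| ≤ κ * b y) (h𝒬 : 𝒬.Nonempty)
    (hDconv : Convex ℝ D) (hTconv : ∀ z, ConvexOn ℝ D fun pa : ℝ × A => T pa.1 pa.2 z)
    (hcconv : ConvexOn ℝ (D ×ˢ univ) fun t : (ℝ × A) × ℝ => c t.1.1 t.1.2 t.2)
    (hcmono : ∀ a, Monotone fun xx : ℝ × ℝ => c xx.1 a xx.2) :
    ConvexOn ℝ D fun p : ℝ × A => worstCaseCost T c 𝒬 J p.1 p.2 :=
  convexOn_csSup_image
    (F := fun (Q : Measure Z) (p : ℝ × A) => ∫ z, (c p.1 p.2 (T p.1 p.2 z) + J (T p.1 p.2 z)) ∂Q)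
    hDconv h𝒬
    (fun _ hQ => convexOn_integral hDconv
      (ae_of_all _ (convexOn_integrand hJmono hJconv hDconv hTconv hcconv hcmono))
      fun _ hp => hb.integrable_integrand hT hJmono.measurable hJb hp hQ)
    fun _ hp => hb.bddAbove_integrals hT hJmono.measurable hκ hJb hp

end IsBoundingFunction

theorem MonotoneConvexBoundedBy.robustBellman (hJ : MonotoneConvexBoundedBy b J)
    (hb : IsBoundingFunction D T c 𝒬 α b) (hα : 0 ≤ α) (hT : ∀ x a, Measurable (T x a))
    (h𝒬 : 𝒬.Nonempty) (hDne : ∀ x, {a | (x, a) ∈ D}.Nonempty)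
    (hDdec : ∀ x x' : ℝ, x ≤ x' → {a : A | (x', a) ∈ D} ⊆ {a : A | (x, a) ∈ D})
    (hDconv : Convex ℝ D) (hTmono : ∀ a z, Monotone fun x => T x a z)
    (hTconv : ∀ z, ConvexOn ℝ D fun pa : ℝ × A => T pa.1 pa.2 z)
    (hcmono : ∀ a, Monotone fun xx : ℝ × ℝ => c xx.1 a xx.2)
    (hcconv : ConvexOn ℝ (D ×ˢ univ) fun t : (ℝ × A) × ℝ => c t.1.1 t.1.2 t.2) :
    MonotoneConvexBoundedBy b (robustBellman D T c 𝒬 J) := by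
  obtain ⟨hJmono, hJconv, κ, hκ, hJb⟩ := hJ
  have hJm := hJmono.measurable
  refine ⟨hb.monotone_robustBellman hT hJmono hκ hJb h𝒬 hDne hDdec hTmono hcmono, ?_,
    1 + κ * α, by positivity, hb.abs_robustBellman_le hT hJm hκ hJb h𝒬 hDne⟩
  exact convexOn_csInf_image_section convex_univ
    (hb.convexOn_worstCaseCost hT hJmono hJconv hκ hJb h𝒬 hDconv hTconv hcconv hcmono)
    (fun x _ => hDne x) fun x _ => hb.bddBelow_worstCaseCost hT hJm hκ hJb h𝒬 x

end StageConvexity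

theorem isBoundingFunction_sub {A Z : Type*} [MeasurableSpace Z] {D : Set (ℝ × A)}
    {T : ℝ → A → Z → ℝ} {c : ℝ → A → ℝ → ℝ} {𝒬 : Set (Measure Z)} {α : ℝ} {bl bu : ℝ → ℝ}
    (hblm : Measurable bl) (hbum : Measurable bu) (hbl0 : ∀ x, bl x ≤ 0) (hbu0 : ∀ x, 0 ≤ bu x)
    (hT : ∀ x a, Measurable (T x a)) (hc : ∀ x a, Measurable fun z => c x a (T x a z))
    (hdom : ∀ x a, (x, a) ∈ D → ∀ Q ∈ 𝒬, ∃ Θ₁ Θ₂ : Z → ℝ, Integrable Θ₁ Q ∧ Integrable Θ₂ Q ∧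
      ∀ z, |c x a (T x a z)| ≤ Θ₁ z ∧ bu (T x a z) - bl (T x a z) ≤ Θ₂ z)
    (hlb : ∀ Q ∈ 𝒬, ∀ x a, (x, a) ∈ D → bl x ≤ ∫ z, min (c x a (T x a z)) 0 ∂Q)
    (hbl_rec : ∀ Q ∈ 𝒬, ∀ x a, (x, a) ∈ D → α * bl x ≤ ∫ z, bl (T x a z) ∂Q)
    (hub : ∀ Q ∈ 𝒬, ∀ x a, (x, a) ∈ D → ∫ z, max (c x a (T x a z)) 0 ∂Q ≤ bu x)
    (hbu_rec : ∀ Q ∈ 𝒬, ∀ x a, (x, a) ∈ D → ∫ z, bu (T x a z) ∂Q ≤ α * bu x) :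
    IsBoundingFunction D T c 𝒬 α (bu - bl) := by
  have hint : ∀ x a, (x, a) ∈ D → ∀ Q ∈ 𝒬, Integrable (fun z => c x a (T x a z)) Q ∧
      Integrable (fun z => bl (T x a z)) Q ∧ Integrable (fun z => bu (T x a z)) Q := by
    intro x a hxa Q hQ
    obtain ⟨Θ₁, Θ₂, hΘ₁, hΘ₂, hdom⟩ := hdom x a hxa Q hQ
    refine ⟨hΘ₁.mono' (hc x a).aestronglyMeasurable (ae_of_all _ fun z => (hdom z).1),
      hΘ₂.mono' (hblm.comp (hT x a)).aestronglyMeasurable (ae_of_all _ fun z => ?_),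
      hΘ₂.mono' (hbum.comp (hT x a)).aestronglyMeasurable (ae_of_all _ fun z => ?_)⟩
    · rw [Real.norm_eq_abs, abs_of_nonpos (hbl0 _)]
      linarith [(hdom z).2, hbu0 (T x a z)]
    · rw [Real.norm_eq_abs, abs_of_nonneg (hbu0 _)]
      linarith [(hdom z).2, hbl0 (T x a z)]
  refine ⟨fun x a hxa Q hQ => (hint x a hxa Q hQ).1,
    fun x a hxa Q hQ => (hint x a hxa Q hQ).2.2.sub (hint x a hxa Q hQ).2.1,
    fun x a hxa Q hQ => abs_integral_le_of_integral_min_max (hint x a hxa Q hQ).1 (hbl0 x)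
      (hbu0 x) (hlb Q hQ x a hxa) (hub Q hQ x a hxa),
    fun x a hxa Q hQ => ?_⟩
  obtain ⟨-, hblT, hbuT⟩ := hint x a hxa Q hQ
  simp only [Pi.sub_apply]
  rw [integral_sub hbuT hblT, mul_sub]
  linarith [hbl_rec Q hQ x a hxa, hbu_rec Q hQ x a hxa]

theorem robust_value_functions_convex_general
    {A Z : Type*}
    [NormedAddCommGroup A] [NormedSpace ℝ A] [MeasurableSpace A]
    [MeasurableSpace Z]
    (N : ℕ)
    (D : ℕ → Set (ℝ × A))
    (hDne : ∀ n x, {a | (x, a) ∈ D n}.Nonempty)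
    (T : ℕ → ℝ → A → Z → ℝ)
    (hT : ∀ n, Measurable fun t : (ℝ × A) × Z => T n t.1.1 t.1.2 t.2)
    -- monotonicity properties
    (hDdec : ∀ n, ∀ x x' : ℝ, x ≤ x' → {a : A | (x', a) ∈ D n} ⊆ {a : A | (x, a) ∈ D n})
    (hTmono : ∀ n (a : A) (z : Z), Monotone fun x : ℝ => T n x a z)
    (c : ℕ → ℝ → A → ℝ → ℝ)
    (hc : ∀ n, Measurable fun t : (ℝ × A) × ℝ => c n t.1.1 t.1.2 t.2)
    (hcmono : ∀ n (a : A), Monotone fun xx : ℝ × ℝ => c n xx.1 a xx.2)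
    (cN : ℝ → ℝ)
    (hcNmono : Monotone cN)
    (P : ℕ → Measure Z) (hP : ∀ n, IsProbabilityMeasure (P n))
    (p q : ℝ≥0∞) (hpq : 1 / p + 1 / q = 1)
    (𝒬 : ℕ → Set (Measure Z)) (h𝒬ne : ∀ n, (𝒬 n).Nonempty)
    (h𝒬prob : ∀ n, ∀ Q ∈ 𝒬 n, IsProbabilityMeasure Q)
    (h𝒬ac : ∀ n, ∀ Q ∈ 𝒬 n, Q ≪ P n)
    (h𝒬Lq : ∀ n, ∀ Q ∈ 𝒬 n, MemLp (fun z => (Q.rnDeriv (P n) z).toReal) q (P n))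
    -- (i) lower and upper bounding functions
    (α εl εu : ℝ) (hα0 : 0 ≤ α)
    (hεl : 0 ≤ εl) (hεu : 0 ≤ εu)
    (bl bu : ℝ → ℝ) (hblm : Measurable bl) (hbum : Measurable bu)
    (hbl_le : ∀ x, bl x ≤ -εl) (hbu_ge : ∀ x, εu ≤ bu x)
    (hlb : ∀ n, n < N → ∀ Q ∈ 𝒬 (n + 1), ∀ x a, (x, a) ∈ D n →
      bl x ≤ ∫ z, min (c n x a (T n x a z)) 0 ∂Q)
    (hbl_rec : ∀ n, n < N → ∀ Q ∈ 𝒬 (n + 1), ∀ x a, (x, a) ∈ D n →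
      α * bl x ≤ ∫ z, bl (T n x a z) ∂Q)
    (hub : ∀ n, n < N → ∀ Q ∈ 𝒬 (n + 1), ∀ x a, (x, a) ∈ D n →
      ∫ z, max (c n x a (T n x a z)) 0 ∂Q ≤ bu x)
    (hbu_rec : ∀ n, n < N → ∀ Q ∈ 𝒬 (n + 1), ∀ x a, (x, a) ∈ D n →
      ∫ z, bu (T n x a z) ∂Q ≤ α * bu x)
    (hcN_bd : ∀ x, bl x ≤ cN x ∧ cN x ≤ bu x)
    -- (ii) local L^p domination (with bounding function b = b̄ − b̲)
    (hLp : ∀ n, n < N → ∀ xa : ℝ × A, xa ∈ D n → ∃ ε > (0 : ℝ), ∃ Θ₁ Θ₂ : Z → ℝ,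
      Measurable Θ₁ ∧ Measurable Θ₂ ∧ (∀ z, 0 ≤ Θ₁ z) ∧ (∀ z, 0 ≤ Θ₂ z) ∧
      MemLp Θ₁ p (P (n + 1)) ∧ MemLp Θ₂ p (P (n + 1)) ∧
      ∀ x a, (x, a) ∈ D n → (x, a) ∈ Metric.closedBall xa ε → ∀ z,
        |c n x a (T n x a z)| ≤ Θ₁ z ∧ bu (T n x a z) - bl (T n x a z) ≤ Θ₂ z)
    -- convex model
    (hDconv : ∀ n, Convex ℝ (D n))
    (hTconv : ∀ n (z : Z), ConvexOn ℝ (D n) fun pa : ℝ × A => T n pa.1 pa.2 z)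
    (hcconv : ∀ n, ConvexOn ℝ ((D n) ×ˢ (Set.univ : Set ℝ))
      fun t : (ℝ × A) × ℝ => c n t.1.1 t.1.2 t.2)
    (hcNconv : ConvexOn ℝ Set.univ cN)
    -- the value functions, given by the Bellman equation
    (J : (n : ℕ) → ℝ → ℝ)
    (hJN : ∀ x : ℝ, J N x = cN x)
    (hJrec : ∀ n, n < N → ∀ x : ℝ,
      J n x = sInf ((fun a : A => sSup ((fun Q : Measure Z =>
          ∫ z, (c n x a (T n x a z) + J (n + 1) (T n x a z)) ∂Q) '' 𝒬 (n + 1))) ''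
        {a : A | (x, a) ∈ D n})) :
    ∀ n, n ≤ N → ConvexOn ℝ Set.univ (J n) := by
  have hbl0 : ∀ x, bl x ≤ 0 := fun x => (hbl_le x).trans (neg_nonpos.2 hεl)
  have hbu0 : ∀ x, 0 ≤ bu x := fun x => hεu.trans (hbu_ge x)
  have hTm : ∀ n x a, Measurable (T n x a) := fun n x a =>
    (hT n).comp (measurable_prodMk_left (x := (x, a)))
  have : p.HolderConjugate q := ENNReal.holderConjugate_iff.2 (by simpa only [one_div] using hpq)
  have hbound : ∀ n < N, IsBoundingFunction (D n) (T n) (c n) (𝒬 (n + 1)) α (bu - bl) := by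
    intro n hn
    refine isBoundingFunction_sub hblm hbum hbl0 hbu0 (hTm n)
      (fun x a => (hc n).comp (measurable_const (a := (x, a)) |>.prodMk (hTm n x a)))
      (fun x a hxa Q hQ => ?_) (hlb n hn) (hbl_rec n hn) (hub n hn) (hbu_rec n hn)
    obtain ⟨ε, hε, Θ₁, Θ₂, -, -, -, -, hΘ₁, hΘ₂, hdom⟩ := hLp n hn (x, a) hxa
    have := hP (n + 1)
    have := h𝒬prob (n + 1) Q hQ
    exact ⟨Θ₁, Θ₂, hΘ₁.integrable_of_rnDeriv_memLp (h𝒬ac _ Q hQ) (h𝒬Lq _ Q hQ),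
      hΘ₂.integrable_of_rnDeriv_memLp (h𝒬ac _ Q hQ) (h𝒬Lq _ Q hQ),
      hdom x a hxa (Metric.mem_closedBall_self hε.le)⟩
  have hinv : ∀ n ≤ N, MonotoneConvexBoundedBy (bu - bl) (J n) := by
    intro n hn
    induction hn using Nat.decreasingInduction with
    | self =>
      rw [show J N = cN from funext hJN]
      exact monotoneConvexBoundedBy_sub hcNmono hcNconv hbl0 hbu0 hcN_bd
    | of_succ n hn ih =>
      rw [show J n = robustBellman (D n) (T n) (c n) (𝒬 (n + 1)) (J (n + 1)) from
        funext (hJrec n hn)]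
      exact ih.robustBellman (hbound n hn) hα0 (hTm n) (h𝒬ne _) (hDne n) (hDdec n) (hDconv n)
        (hTmono n) (hTconv n) (hcmono n) (hcconv n)
  exact fun n hn => (hinv n hn).convexOn

/-- In the finite-horizon robust MDP with real state space under the
monotone semicontinuous model, assume additionally a convex model: the action space `A` is a
subset of a vector space, `D_n` is convex, `c_N` is convex, `(x,a) ↦ T_n(x,a,z)` is convex for
every `z`, and `(x,a,x') ↦ c_n(x,a,x')` is convex. Then every value function `J_n`
(`n = 0,…,N`, given by the Bellman equation) is convex on `ℝ`. -/
theorem robust_value_functions_convex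
    {A Z : Type*}
    [NormedAddCommGroup A] [NormedSpace ℝ A] [MeasurableSpace A] [BorelSpace A]
    [MeasurableSpace Z]
    (N : ℕ)
    (D : ℕ → Set (ℝ × A)) (hD : ∀ n, MeasurableSet (D n))
    (hDne : ∀ n x, {a | (x, a) ∈ D n}.Nonempty)
    -- compactness and upper semicontinuity of the admissible sets
    (hDcomp : ∀ n x, IsCompact {a | (x, a) ∈ D n})
    (hDusc : ∀ n, ∀ (xs : ℕ → ℝ) (as : ℕ → A) (x : ℝ), Tendsto xs atTop (nhds x) →
      (∀ k, (xs k, as k) ∈ D n) → ∃ a, (x, a) ∈ D n ∧ MapClusterPt a atTop as)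
    (T : ℕ → ℝ → A → Z → ℝ)
    (hT : ∀ n, Measurable fun t : (ℝ × A) × Z => T n t.1.1 t.1.2 t.2)
    (hTlsc : ∀ n z, LowerSemicontinuous fun pa : ℝ × A => T n pa.1 pa.2 z)
    -- monotonicity properties
    (hDdec : ∀ n, ∀ x x' : ℝ, x ≤ x' → {a : A | (x', a) ∈ D n} ⊆ {a : A | (x, a) ∈ D n})
    (hTmono : ∀ n (a : A) (z : Z), Monotone fun x : ℝ => T n x a z)
    (c : ℕ → ℝ → A → ℝ → ℝ)
    (hc : ∀ n, Measurable fun t : (ℝ × A) × ℝ => c n t.1.1 t.1.2 t.2)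
    (hclsc : ∀ n, LowerSemicontinuous fun t : (ℝ × A) × ℝ => c n t.1.1 t.1.2 t.2)
    (hcmono : ∀ n (a : A), Monotone fun xx : ℝ × ℝ => c n xx.1 a xx.2)
    (cN : ℝ → ℝ) (hcN : Measurable cN) (hcNlsc : LowerSemicontinuous cN)
    (hcNmono : Monotone cN)
    (P : ℕ → Measure Z) (hP : ∀ n, IsProbabilityMeasure (P n))
    (p q : ℝ≥0∞) [Fact (1 ≤ p)] [Fact (1 ≤ q)] (hq : 1 < q) (hpq : 1 / p + 1 / q = 1)
    (hPsep : ∀ n, TopologicalSpace.SeparableSpace (Lp ℝ p (P n)))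
    (𝒬 : ℕ → Set (Measure Z)) (h𝒬ne : ∀ n, (𝒬 n).Nonempty)
    (h𝒬prob : ∀ n, ∀ Q ∈ 𝒬 n, IsProbabilityMeasure Q)
    (h𝒬ac : ∀ n, ∀ Q ∈ 𝒬 n, Q ≪ P n)
    (h𝒬Lq : ∀ n, ∀ Q ∈ 𝒬 n, MemLp (fun z => (Q.rnDeriv (P n) z).toReal) q (P n))
    -- (iii) norm-bounded ambiguity sets
    (K : ℝ) (hK : 1 ≤ K)
    (h𝒬bdd : ∀ n, ∀ Q ∈ 𝒬 n,
      eLpNorm (fun z => (Q.rnDeriv (P n) z).toReal) q (P n) ≤ ENNReal.ofReal K)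
    -- (i) lower and upper bounding functions
    (α εl εu : ℝ) (hα0 : 0 ≤ α) (hα1 : α ≠ 1)
    (hεl : 0 ≤ εl) (hεu : 0 ≤ εu) (hε : εl + εu = 1)
    (bl bu : ℝ → ℝ) (hblm : Measurable bl) (hbum : Measurable bu)
    (hbl_le : ∀ x, bl x ≤ -εl) (hbu_ge : ∀ x, εu ≤ bu x)
    (hlb : ∀ n, n < N → ∀ Q ∈ 𝒬 (n + 1), ∀ x a, (x, a) ∈ D n →
      bl x ≤ ∫ z, min (c n x a (T n x a z)) 0 ∂Q)
    (hbl_rec : ∀ n, n < N → ∀ Q ∈ 𝒬 (n + 1), ∀ x a, (x, a) ∈ D n →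
      α * bl x ≤ ∫ z, bl (T n x a z) ∂Q)
    (hub : ∀ n, n < N → ∀ Q ∈ 𝒬 (n + 1), ∀ x a, (x, a) ∈ D n →
      ∫ z, max (c n x a (T n x a z)) 0 ∂Q ≤ bu x)
    (hbu_rec : ∀ n, n < N → ∀ Q ∈ 𝒬 (n + 1), ∀ x a, (x, a) ∈ D n →
      ∫ z, bu (T n x a z) ∂Q ≤ α * bu x)
    (hcN_bd : ∀ x, bl x ≤ cN x ∧ cN x ≤ bu x)
    -- (ii) local L^p domination (with bounding function b = b̄ − b̲)
    (hLp : ∀ n, n < N → ∀ xa : ℝ × A, xa ∈ D n → ∃ ε > (0 : ℝ), ∃ Θ₁ Θ₂ : Z → ℝ,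
      Measurable Θ₁ ∧ Measurable Θ₂ ∧ (∀ z, 0 ≤ Θ₁ z) ∧ (∀ z, 0 ≤ Θ₂ z) ∧
      MemLp Θ₁ p (P (n + 1)) ∧ MemLp Θ₂ p (P (n + 1)) ∧
      ∀ x a, (x, a) ∈ D n → (x, a) ∈ Metric.closedBall xa ε → ∀ z,
        |c n x a (T n x a z)| ≤ Θ₁ z ∧ bu (T n x a z) - bl (T n x a z) ≤ Θ₂ z)
    -- convex model
    (hDconv : ∀ n, Convex ℝ (D n))
    (hTconv : ∀ n (z : Z), ConvexOn ℝ (D n) fun pa : ℝ × A => T n pa.1 pa.2 z)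
    (hcconv : ∀ n, ConvexOn ℝ ((D n) ×ˢ (Set.univ : Set ℝ))
      fun t : (ℝ × A) × ℝ => c n t.1.1 t.1.2 t.2)
    (hcNconv : ConvexOn ℝ Set.univ cN)
    -- the value functions, given by the Bellman equation
    (J : (n : ℕ) → ℝ → ℝ)
    (hJN : ∀ x : ℝ, J N x = cN x)
    (hJrec : ∀ n, n < N → ∀ x : ℝ,
      J n x = sInf ((fun a : A => sSup ((fun Q : Measure Z =>
          ∫ z, (c n x a (T n x a z) + J (n + 1) (T n x a z)) ∂Q) '' 𝒬 (n + 1))) ''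
        {a : A | (x, a) ∈ D n})) :
    ∀ n, n ≤ N → ConvexOn ℝ Set.univ (J n) :=
  robust_value_functions_convex_general N D hDne T hT hDdec hTmono c hc hcmono cN hcNmono P hP p q
    hpq 𝒬 h𝒬ne h𝒬prob h𝒬ac h𝒬Lq α εl εu hα0 hεl hεu bl bu hblm hbum hbl_le hbu_ge hlb hbl_rec hub
    hbu_rec hcN_bd hLp hDconv hTconv hcconv hcNconv J hJN hJrec
end

section
/- For the function f : [0,1] × [0,1] → ℝ, f(a,p) = −(1−p)·a² − p·(a−1)², the lower value of the minimization-maximization problem equals −1/4: inf_{a ∈ [0,1]} sup_{p ∈ [0,1]} f(a,p) = −1/4. -/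
lemma inner_sup (a : ℝ) :
    sSup ((fun p : ℝ => -(1 - p) * a ^ 2 - p * (a - 1) ^ 2) '' Set.Icc (0 : ℝ) 1)
      = max (-a ^ 2) (-(a - 1) ^ 2) := by
  apply IsGreatest.csSup_eq
  constructor
  · rcases le_total (-a ^ 2) (-(a - 1) ^ 2) with h | h
    · rw [max_eq_right h]
      exact ⟨1, by constructor <;> [norm_num; ring]⟩
    · rw [max_eq_left h]
      exact ⟨0, by constructor <;> [norm_num; ring]⟩
  · rintro y ⟨p, ⟨hp0, hp1⟩, rfl⟩
    rcases le_total (-a ^ 2) (-(a - 1) ^ 2) with h | h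
    · have h' : (a - 1) ^ 2 ≤ a ^ 2 := by linarith
      refine le_max_of_le_right ?_
      show -(1 - p) * a ^ 2 - p * (a - 1) ^ 2 ≤ -(a - 1) ^ 2
      nlinarith [mul_nonneg (sub_nonneg.2 hp1) (sub_nonneg.2 h')]
    · have h' : a ^ 2 ≤ (a - 1) ^ 2 := by linarith
      refine le_max_of_le_left ?_
      show -(1 - p) * a ^ 2 - p * (a - 1) ^ 2 ≤ -a ^ 2
      nlinarith [mul_nonneg hp0 (sub_nonneg.2 h')]

/-- For `f : [0,1] × [0,1] → ℝ`, `f(a,p) = −(1−p)·a² − p·(a−1)²`, the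
upper value of the minimization–maximization problem equals `−1/4`:
`inf_{a ∈ [0,1]} sup_{p ∈ [0,1]} f(a,p) = −1/4`. -/
theorem counterexample_inf_sup_eq_neg_quarter :
    sInf ((fun a : ℝ =>
        sSup ((fun p : ℝ => -(1 - p) * a ^ 2 - p * (a - 1) ^ 2) '' Set.Icc (0 : ℝ) 1)) ''
      Set.Icc (0 : ℝ) 1) = -(1 / 4) := by
  have himg : ((fun a : ℝ =>
      sSup ((fun p : ℝ => -(1 - p) * a ^ 2 - p * (a - 1) ^ 2) '' Set.Icc (0 : ℝ) 1)) ''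
        Set.Icc (0 : ℝ) 1)
      = (fun a : ℝ => max (-a ^ 2) (-(a - 1) ^ 2)) '' Set.Icc (0 : ℝ) 1 := by
    apply Set.image_congr
    intro a _
    exact inner_sup a
  rw [himg]
  apply IsLeast.csInf_eq
  constructor
  · refine ⟨1 / 2, by norm_num, ?_⟩
    norm_num
  · rintro y ⟨a, ⟨ha0, ha1⟩, rfl⟩
    rcases le_total a (1 / 2) with h | h
    · refine le_trans ?_ (le_max_of_le_left (le_refl (-a ^ 2)))
      nlinarith
    · refine le_trans ?_ (le_max_of_le_right (le_refl (-(a - 1) ^ 2)))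
      nlinarith
end
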